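/- arXiv:2404.05251 — 2 statements merged into one kernel-verified Lean document; each statement's English description precedes it below -/
import Mathlib

section
/- Let p be an odd prime, m a positive integer with gcd(m−1,p−1)=1, SQ the set of nonzero squares in F_p, and K(i,j)=∑_{c∈F_p^*} ξ_p^{c^{1−m}j−ci}. Then ∑_{i∈SQ} K(i,j) = −(p−1)/2 if j=0, and ∑_{i∈SQ} K(i,j) = (η(j)p+1)/2 if j≠0. -/
/-- `ξ_p^y` for `y : ZMod p`, where `ξ_p = exp(2πi/p)`. -/
noncomputable def xi (p : ℕ) (y : ZMod p) : ℂ :=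
  Complex.exp (2 * Real.pi * Complex.I * y.val / p)

/-- `K^{(m)}(i,j) = ∑_{c ∈ F_p^*} ξ_p^{c^{1-m} j - c i}`. -/
noncomputable def Km (p : ℕ) [Fact p.Prime] (m : ℕ) (i j : ZMod p) : ℂ :=
  ∑ c ∈ Finset.univ.filter (fun c : ZMod p => c ≠ 0),
    xi p (c ^ ((1 : ℤ) - m) * j - c * i)

/-!
Since `p - 1` is even, `gcd(m - 1, p - 1) = 1` forces `m` to be even, so `c^{-m}` is a nonzero
square. Replacing `i` by `c^{-m} i` permutes the squares and turns `c^{1-m} j - c i` into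
`c^{1-m} (j - i)`; as `c ↦ c^{1-m}` permutes `F_p^*`, the sum becomes
`∑_{i ∈ SQ} ∑_{d ≠ 0} ξ_p^{d (j - i)} = p [j ∈ SQ] - |SQ|`, with `|SQ| = (p - 1) / 2`.
-/

open Finset Function

theorem zpow_left_bijective_of_coprime {G : Type*} [Group G] {n : ℤ}
    (hn : (Nat.card G).Coprime n.natAbs) : Bijective (· ^ n : G → G) := by
  rcases Int.natAbs_eq n with h | h <;> rw [h]
  · simpa only [zpow_natCast] using hn.pow_left_bijective
  · simp only [zpow_neg, zpow_natCast]
    exact inv_involutive.bijective.comp hn.pow_left_bijective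

section GroupWithZero

variable {G₀ M : Type*} [GroupWithZero G₀] [Fintype G₀] [DecidableEq G₀] [AddCommMonoid M]

theorem sum_filter_ne_zero_eq_sum_units (f : G₀ → M) :
    ∑ c ∈ univ.filter (fun c : G₀ => c ≠ 0), f c = ∑ u : G₀ˣ, f u := by
  rw [← sum_subtype_eq_sum_filter, subtype_univ]
  exact (Fintype.sum_equiv (unitsEquivNeZero (G₀ := G₀)) _ _ fun _ => rfl).symm

theorem sum_filter_ne_zero_comp_zpow {n : ℤ} (hn : (Nat.card G₀ˣ).Coprime n.natAbs)
    (f : G₀ → M) :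
    ∑ c ∈ univ.filter (fun c : G₀ => c ≠ 0), f (c ^ n)
      = ∑ c ∈ univ.filter (fun c : G₀ => c ≠ 0), f c := by
  simp only [sum_filter_ne_zero_eq_sum_units, ← Units.val_zpow_eq_zpow_val]
  exact (zpow_left_bijective_of_coprime hn).sum_comp (fun u : G₀ˣ => f u)

end GroupWithZero

theorem MulChar.sum_filter_comp_mul_left {R R' M : Type*} [CommMonoid R] [Fintype R]
    [CommMonoidWithZero R'] [DecidableEq R'] [AddCommMonoid M] (χ : MulChar R R') {u : R}
    (hu : IsUnit u) (hχu : χ u = 1) (a : R') (f : R → M) :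
    ∑ i ∈ univ.filter (χ · = a), f (u * i) = ∑ i ∈ univ.filter (χ · = a), f i := by
  simp only [sum_filter]
  refine Fintype.sum_equiv (Units.mulLeft hu.unit) _ _ fun i => ?_
  simp [map_mul, hχu]

theorem AddChar.sum_filter_ne_zero_mul {R R' : Type*} [CommRing R] [Fintype R] [DecidableEq R]
    [CommRing R'] [IsDomain R'] {ψ : AddChar R R'} (hψ : ψ.IsPrimitive) (b : R) :
    ∑ x ∈ univ.filter (fun x : R => x ≠ 0), ψ (x * b)
      = if b = 0 then (Fintype.card R : R') - 1 else -1 := by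
  rw [filter_ne', sum_erase_eq_sub (mem_univ 0), sum_mulShift b hψ]
  split_ifs <;> simp

section FiniteField

variable {F : Type*} [Field F] [Fintype F] [DecidableEq F]

theorem quadraticChar_two_mul_card_filter_eq_one (hF : ringChar F ≠ 2) :
    2 * #(univ.filter (quadraticChar F · = 1)) = Fintype.card F - 1 := by
  have hpt (a : F) : quadraticChar F a + (quadraticChar F ^ 2) a
      = if quadraticChar F a = 1 then 2 else 0 := by
    rw [MulChar.pow_apply' _ two_ne_zero]
    rcases eq_or_ne a 0 with rfl | ha
    · simp
    · rcases quadraticChar_dichotomy ha with h | h <;> simp [h]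
  have hsum : (2 * #(univ.filter (quadraticChar F · = 1)) : ℤ) = Fintype.card Fˣ := by
    rw [← MulChar.sum_one_eq_card_units (R' := ℤ),
      ← (quadraticChar_isQuadratic F).sq_eq_one, ← zero_add (∑ a, _),
      ← quadraticChar_sum_zero hF, ← sum_add_distrib, sum_congr rfl fun a _ => hpt a,
      ← sum_filter, sum_const, nsmul_eq_mul, mul_comm]
  rw [← Fintype.card_units]
  exact_mod_cast hsum

theorem sum_filter_quadraticChar_eq_one_comp_zpow_odd_mul {M : Type*} [AddCommMonoid M] {n : ℤ}
    (hn : Odd n) {c : F} (hc : c ≠ 0) (f : F → M) :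
    ∑ i ∈ univ.filter (quadraticChar F · = 1), f (c ^ n * i)
      = ∑ i ∈ univ.filter (quadraticChar F · = 1), f (c * i) := by
  obtain ⟨k, rfl⟩ := hn
  have hsq : c ^ (2 * k + 1) = c * (c ^ k) ^ 2 := by
    rw [zpow_add_one₀ hc, mul_comm 2 k, zpow_mul, mul_comm]
    norm_cast
  simp_rw [hsq, mul_assoc]
  exact MulChar.sum_filter_comp_mul_left _ (pow_ne_zero 2 (zpow_ne_zero k hc)).isUnit
    (quadraticChar_sq_one' (zpow_ne_zero k hc)) 1 fun i => f (c * i)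

theorem sum_filter_quadraticChar_eq_one_sum_addChar_mul_sub (hF : ringChar F ≠ 2)
    {ψ : AddChar F ℂ} (hψ : ψ.IsPrimitive) (j : F) :
    ∑ i ∈ univ.filter (quadraticChar F · = 1),
        ∑ c ∈ univ.filter (fun c : F => c ≠ 0), ψ (c * (j - i))
      = if j = 0 then -((Fintype.card F : ℂ) - 1) / 2
        else ((quadraticChar F j : ℂ) * Fintype.card F + 1) / 2 := by
  set q := Fintype.card F
  have hcard : (#(univ.filter (quadraticChar F · = 1)) : ℂ) = ((q : ℂ) - 1) / 2 := by
    have h := congrArg (Nat.cast : ℕ → ℂ) (quadraticChar_two_mul_card_filter_eq_one hF)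
    rw [Nat.cast_sub Fintype.card_pos] at h
    push_cast at h
    linear_combination h / 2
  calc _ = ∑ i ∈ univ.filter (quadraticChar F · = 1), ((if j = i then (q : ℂ) else 0) - 1) := by
        refine sum_congr rfl fun i _ => ?_
        rw [AddChar.sum_filter_ne_zero_mul hψ]
        simp only [sub_eq_zero]
        split_ifs <;> ring
    _ = (if quadraticChar F j = 1 then (q : ℂ) else 0) - ((q : ℂ) - 1) / 2 := by
        rw [sum_sub_distrib, sum_ite_eq, sum_const, nsmul_one, hcard]
        simp only [mem_filter, mem_univ, true_and]
    _ = _ := by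
        rcases eq_or_ne j 0 with rfl | hj
        · rw [if_pos rfl, if_neg (by simp)]
          ring
        · rw [if_neg hj]
          rcases quadraticChar_dichotomy hj with h | h <;> norm_num [h] <;> ring

end FiniteField

theorem xi_eq_stdAddChar {p : ℕ} [Fact p.Prime] (y : ZMod p) : xi p y = ZMod.stdAddChar y := by
  rw [ZMod.stdAddChar_apply, ZMod.toCircle_apply]
  rfl

theorem sum_Km_over_squares_general (p : ℕ) [Fact p.Prime] (hp : p ≠ 2)
    (m : ℕ) (hgcd : Nat.gcd (m - 1) (p - 1) = 1) (j : ZMod p) :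
    ∑ i ∈ Finset.univ.filter (fun i : ZMod p => quadraticChar (ZMod p) i = 1),
        Km p m i j
      = if j = 0 then -((p : ℂ) - 1) / 2
        else ((quadraticChar (ZMod p) j : ℂ) * p + 1) / 2 := by
  set SQ := univ.filter (fun i : ZMod p => quadraticChar (ZMod p) i = 1)
  set ψ := (ZMod.stdAddChar : AddChar (ZMod p) ℂ)
  have hprime : p.Prime := Fact.out
  obtain ⟨k, hk⟩ : Odd (m - 1) :=
    (Nat.Coprime.coprime_dvd_right (hprime.even_sub_one hp).two_dvd hgcd).symm.odd_of_left
  have hodd : Odd ((1 : ℤ) - m) := ⟨-(k + 1), by omega⟩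
  have hcop : (Nat.card (ZMod p)ˣ).Coprime ((1 : ℤ) - m).natAbs := by
    rw [Nat.card_units, Nat.card_zmod, show ((1 : ℤ) - m).natAbs = m - 1 by omega]
    exact Nat.coprime_comm.mp hgcd
  calc ∑ i ∈ SQ, Km p m i j
      = ∑ c ∈ univ.filter (fun c : ZMod p => c ≠ 0), ∑ i ∈ SQ,
          ψ (c ^ ((1 : ℤ) - m) * (j - i)) := by
        simp only [Km, xi_eq_stdAddChar]
        rw [sum_comm]
        refine sum_congr rfl fun c hc => ?_
        simpa only [mul_sub] using (sum_filter_quadraticChar_eq_one_comp_zpow_odd_mul hodd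
          (mem_filter.1 hc).2 fun x => ψ (c ^ ((1 : ℤ) - m) * j - x)).symm
    _ = ∑ i ∈ SQ, ∑ c ∈ univ.filter (fun c : ZMod p => c ≠ 0), ψ (c * (j - i)) := by
        rw [sum_filter_ne_zero_comp_zpow hcop fun d => ∑ i ∈ SQ, ψ (d * (j - i)), sum_comm]
    _ = _ := by
        simpa only [ZMod.card] using sum_filter_quadraticChar_eq_one_sum_addChar_mul_sub
          (by rwa [ZMod.ringChar_zmod_n]) (ZMod.isPrimitive_stdAddChar p) j

theorem sum_Km_over_squares (p : ℕ) [Fact p.Prime] (hp : p ≠ 2)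
    (m : ℕ) (hm : 1 ≤ m) (hgcd : Nat.gcd (m - 1) (p - 1) = 1) (j : ZMod p) :
    ∑ i ∈ Finset.univ.filter (fun i : ZMod p => quadraticChar (ZMod p) i = 1),
        Km p m i j
      = if j = 0 then -((p : ℂ) - 1) / 2
        else ((quadraticChar (ZMod p) j : ℂ) * p + 1) / 2 :=
  sum_Km_over_squares_general p hp m hgcd j
end

section
/- Let p be an odd prime, m a positive integer with gcd(m−1,p−1)=1, NSQ the set of nonsquares in F_p^*, and K(i,j)=∑_{c∈F_p^*} ξ_p^{c^{1−m}j−ci}. Then ∑_{i∈NSQ} K(i,j) = −(p−1)/2 if j=0, and ∑_{i∈NSQ} K(i,j) = (−η(j)p+1)/2 if j≠0. -/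
open Finset

section FiniteField

variable {F : Type*} [Field F] [Fintype F]

theorem exists_zpow_zpow_eq_self {n : ℤ} (hn : IsCoprime n ((Fintype.card F : ℤ) - 1)) :
    ∃ a : ℤ, ∀ c : F, c ≠ 0 → (c ^ n) ^ a = c := by
  obtain ⟨a, b, hab⟩ := hn
  refine ⟨a, fun c hc => ?_⟩
  have hcq : c ^ ((Fintype.card F : ℤ) - 1) = 1 := by
    rw [zpow_sub_one₀ hc, zpow_natCast, FiniteField.pow_card, mul_inv_cancel₀ hc]
  rw [← zpow_mul, mul_comm, show a * n = 1 - b * ((Fintype.card F : ℤ) - 1) by linarith,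
    zpow_sub₀ hc, mul_comm b, zpow_mul, hcq, one_zpow, div_one, zpow_one]

variable [DecidableEq F] {M : Type*} [AddCommMonoid M]

theorem sum_ne_zero_zpow {n : ℤ} (hn : IsCoprime n ((Fintype.card F : ℤ) - 1)) (f : F → M) :
    ∑ c ∈ {c : F | c ≠ 0}, f (c ^ n) = ∑ c ∈ {c : F | c ≠ 0}, f c := by
  obtain ⟨a, ha⟩ := exists_zpow_zpow_eq_self hn
  refine sum_nbij' (· ^ n) (· ^ a) (fun c hc => ?_) (fun d hd => ?_) (fun c hc => ?_)
    (fun d hd => ?_) (fun _ _ => rfl) <;> simp only [mem_filter, mem_univ, true_and] at *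
  · exact zpow_ne_zero n hc
  · exact zpow_ne_zero a hd
  · exact ha c hc
  · rw [← zpow_mul, mul_comm, zpow_mul, ha d hd]

theorem sum_quadraticChar_fiber_mul_left {u : F} (hu : u ≠ 0) (e : ℤ) (g : F → M) :
    ∑ i ∈ {i | quadraticChar F i = e}, g (u * i)
      = ∑ i ∈ {i | quadraticChar F i = quadraticChar F u * e}, g i := by
  refine sum_equiv (Equiv.mulLeft₀ u hu) (fun i => ?_) (fun _ _ => rfl)
  have hχu : quadraticChar F u ≠ 0 := quadraticChar_eq_zero_iff.not.mpr hu
  simp only [mem_filter, mem_univ, true_and, Equiv.mulLeft₀_apply, map_mul, mul_right_inj' hχu]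

theorem two_mul_card_nonsquares (hF : ringChar F ≠ 2) :
    2 * #{a : F | quadraticChar F a = -1} = Fintype.card F - 1 := by
  obtain ⟨u, hu⟩ := FiniteField.exists_nonsquare hF
  have hu0 : u ≠ 0 := by rintro rfl; exact hu IsSquare.zero
  have hcard : #{a : F | quadraticChar F a = 1} = #{a : F | quadraticChar F a = -1} := by
    simpa only [card_eq_sum_ones, quadraticChar_neg_one_iff_not_isSquare.mpr hu, neg_one_mul]
      using sum_quadraticChar_fiber_mul_left hu0 1 (fun _ => 1)
  have hunion : ({a | quadraticChar F a = 1} : Finset F) ∪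
      ({a | quadraticChar F a = -1} : Finset F) = univ.erase 0 := by
    ext a
    rcases eq_or_ne a 0 with rfl | ha
    · simp only [mem_union, mem_filter, mem_univ, true_and, mem_erase, quadraticChar_zero]
      norm_num
    · rcases quadraticChar_dichotomy ha with h | h <;>
        simp only [mem_union, mem_filter, mem_univ, true_and, mem_erase, and_true, h] <;>
        norm_num [ha]
  have hdisj : Disjoint ({a | quadraticChar F a = 1} : Finset F)
      ({a | quadraticChar F a = -1} : Finset F) :=
    disjoint_filter.mpr fun _ _ h => by rw [h]; decide
  rw [two_mul]
  nth_rewrite 1 [← hcard]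
  rw [← card_union_of_disjoint hdisj, hunion, card_erase_of_mem (mem_univ 0), card_univ]

theorem sum_nonsquares_sum_ne_zero_zpow {n : ℤ} (hodd : Odd n)
    (hn : IsCoprime n ((Fintype.card F : ℤ) - 1)) (f : F → F → M) :
    ∑ i ∈ {i : F | quadraticChar F i = -1}, ∑ c ∈ {c : F | c ≠ 0}, f (c ^ n) (c * i)
      = ∑ i ∈ {i : F | quadraticChar F i = -1}, ∑ c ∈ {c : F | c ≠ 0}, f c (c * i) := by
  obtain ⟨k, rfl⟩ := hodd
  have hscale : ∀ c ∈ ({c | c ≠ 0} : Finset F),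
      ∑ i ∈ {i | quadraticChar F i = -1}, f (c ^ (2 * k + 1)) (c * i)
        = ∑ i ∈ {i | quadraticChar F i = -1}, f (c ^ (2 * k + 1)) (c ^ (2 * k + 1) * i) := by
    intro c hc
    have hc0 : c ≠ 0 := (mem_filter.mp hc).2
    have hck : c ^ k ≠ 0 := zpow_ne_zero k hc0
    have hpow : c ^ (2 * k + 1) = (c ^ k) ^ 2 * c := by
      rw [zpow_add_one₀ hc0, mul_comm 2 k, zpow_mul, zpow_two, sq]
    simpa only [quadraticChar_sq_one' hck, one_mul, hpow, mul_assoc, mul_left_comm c] using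
      (sum_quadraticChar_fiber_mul_left (pow_ne_zero 2 hck) (-1)
        (fun i => f (c ^ (2 * k + 1)) (c * i))).symm
  rw [sum_comm, sum_congr rfl hscale,
    sum_ne_zero_zpow hn (fun d => ∑ i ∈ {i | quadraticChar F i = -1}, f d (d * i)), sum_comm]

theorem AddChar.sum_ne_zero_mulShift {R : Type*} [CommRing R] [Fintype R] [DecidableEq R]
    {R' : Type*} [CommRing R'] [IsDomain R'] {ψ : AddChar R R'} (hψ : ψ.IsPrimitive) (b : R) :
    ∑ x ∈ {x : R | x ≠ 0}, ψ (x * b) = (if b = 0 then (Fintype.card R : R') else 0) - 1 := by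
  rw [filter_ne', sum_erase_eq_sub (mem_univ 0), AddChar.sum_mulShift b hψ, zero_mul,
    AddChar.map_zero_eq_one, Nat.cast_ite, Nat.cast_zero]

theorem sum_nonsquares_sum_ne_zero_addChar (hF : ringChar F ≠ 2) {ψ : AddChar F ℂ}
    (hψ : ψ.IsPrimitive) (j : F) :
    ∑ i ∈ {i : F | quadraticChar F i = -1}, ∑ c ∈ {c : F | c ≠ 0}, ψ (c * j - c * i)
      = if j = 0 then -((Fintype.card F : ℂ) - 1) / 2
        else (-(quadraticChar F j : ℂ) * Fintype.card F + 1) / 2 := by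
  have hinner : ∀ i : F, ∑ c ∈ {c : F | c ≠ 0}, ψ (c * j - c * i)
      = (if i = j then (Fintype.card F : ℂ) else 0) - 1 := fun i => by
    simp only [← mul_sub, ψ.sum_ne_zero_mulShift hψ, sub_eq_zero, eq_comm]
  have hcard : (#{i : F | quadraticChar F i = -1} : ℂ) = ((Fintype.card F : ℂ) - 1) / 2 := by
    rw [eq_div_iff two_ne_zero, mul_comm, ← Nat.cast_pred Fintype.card_pos]
    exact_mod_cast two_mul_card_nonsquares hF
  rw [sum_congr rfl fun i _ => hinner i, sum_sub_distrib, sum_ite_eq', sum_const, nsmul_one, hcard]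
  rcases eq_or_ne j 0 with rfl | hj
  · simp only [quadraticChar_zero, mem_filter, mem_univ, true_and, if_true]
    norm_num
    ring
  · rcases quadraticChar_dichotomy hj with h | h <;>
      simp only [h, hj, mem_filter, mem_univ, true_and] <;> norm_num <;> ring

end FiniteField

theorem odd_and_isCoprime_one_sub {p m : ℕ} (hp : Odd p) (h : Nat.Coprime (m - 1) (p - 1)) :
    Odd ((1 : ℤ) - m) ∧ IsCoprime ((1 : ℤ) - m) ((p : ℤ) - 1) := by
  obtain ⟨t, ht⟩ := (h.coprime_dvd_right (Nat.Odd.sub_odd hp odd_one).two_dvd).odd_of_right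
  have hm : (1 : ℤ) - m = -((m - 1 : ℕ) : ℤ) := by omega
  have hp1 : ((p - 1 : ℕ) : ℤ) = p - 1 := by have := hp.pos; omega
  refine ⟨⟨-t - 1, by omega⟩, ?_⟩
  rw [hm, ← hp1]
  exact (Nat.isCoprime_iff_coprime.mpr h).neg_left

theorem exists_isPrimitive_addChar_eq_xi (p : ℕ) [NeZero p] :
    ∃ ψ : AddChar (ZMod p) ℂ, ψ.IsPrimitive ∧ ⇑ψ = xi p := by
  have hζ := Complex.isPrimitiveRoot_exp p (NeZero.ne p)
  refine ⟨AddChar.zmodChar p hζ.pow_eq_one, AddChar.zmodChar_primitive_of_primitive_root p hζ,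
    funext fun y => ?_⟩
  rw [AddChar.zmodChar_apply, ← Complex.exp_nat_mul, xi]
  ring_nf

theorem sum_Km_over_nonsquares_general (p : ℕ) [Fact p.Prime] (hp : p ≠ 2)
    (m : ℕ) (hgcd : Nat.gcd (m - 1) (p - 1) = 1) (j : ZMod p) :
    ∑ i ∈ Finset.univ.filter (fun i : ZMod p => quadraticChar (ZMod p) i = -1),
        Km p m i j
      = if j = 0 then -((p : ℂ) - 1) / 2
        else (-(quadraticChar (ZMod p) j : ℂ) * p + 1) / 2 := by
  obtain ⟨hodd, hcop⟩ := odd_and_isCoprime_one_sub ((Fact.out : p.Prime).odd_of_ne_two hp) hgcd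
  obtain ⟨ψ, hψ, hψxi⟩ := exists_isPrimitive_addChar_eq_xi p
  calc _
    _ = ∑ i ∈ {i : ZMod p | quadraticChar (ZMod p) i = -1},
          ∑ c ∈ {c : ZMod p | c ≠ 0}, ψ (c * j - c * i) := by
      simp only [Km, ← hψxi]
      exact sum_nonsquares_sum_ne_zero_zpow hodd (by rwa [ZMod.card]) (fun d e => ψ (d * j - e))
    _ = _ := by
      simpa only [ZMod.card] using
        sum_nonsquares_sum_ne_zero_addChar (by rwa [ZMod.ringChar_zmod_n]) hψ j

theorem sum_Km_over_nonsquares (p : ℕ) [Fact p.Prime] (hp : p ≠ 2)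
    (m : ℕ) (hm : 1 ≤ m) (hgcd : Nat.gcd (m - 1) (p - 1) = 1) (j : ZMod p) :
    ∑ i ∈ Finset.univ.filter (fun i : ZMod p => quadraticChar (ZMod p) i = -1),
        Km p m i j
      = if j = 0 then -((p : ℂ) - 1) / 2
        else (-(quadraticChar (ZMod p) j : ℂ) * p + 1) / 2 :=
  sum_Km_over_nonsquares_general p hp m hgcd j
end
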